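/- Let T = ∑_{k=0}^{d-1} α_k Z X^k with α_k = (1/d) ∑_{l=0}^{d-1} ω^{lk} e^{iφ_l} and assume ∑_{l=0}^{d-1} φ_l = 0. Then T^d = 1. -/

import Mathlib

open Complex Finset Matrix

/-- The root of unity `ω = exp(2πi/d)`. -/
noncomputable def omega (d : ℕ) : ℂ := Complex.exp (2 * Real.pi * Complex.I / d)

/-- The Heisenberg-Weyl operator `Z = ∑_k ω^k |k⟩⟨k|`. -/
noncomputable def HWZ (d : ℕ) : Matrix (Fin d) (Fin d) ℂ :=
  Matrix.diagonal (fun k => omega d ^ (k : ℕ))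

/-- The Heisenberg-Weyl operator `X = ∑_k |k+1 mod d⟩⟨k|`. -/
def HWX (d : ℕ) [NeZero d] : Matrix (Fin d) (Fin d) ℂ :=
  Matrix.of (fun i j => if i = j + 1 then 1 else 0)

/-- The coefficients `α_k = (1/d) ∑_{l=0}^{d-1} ω^{lk} e^{iφ_l}`. -/
noncomputable def alphaCoef (d : ℕ) (φ : ℕ → ℝ) (k : ℕ) : ℂ :=
  (1 / d) * ∑ l ∈ Finset.range d, omega d ^ (l * k) * Complex.exp (Complex.I * φ l)

/-- The operator `T = ∑_{k=0}^{d-1} α_k Z X^k`. -/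
noncomputable def Tgate (d : ℕ) [NeZero d] (φ : ℕ → ℝ) : Matrix (Fin d) (Fin d) ℂ :=
  ∑ k ∈ Finset.range d, alphaCoef d φ k • (HWZ d * HWX d ^ k)
open Fin.NatCast Fin.CommRing


lemma omega_prim (d : ℕ) [NeZero d] : IsPrimitiveRoot (omega d) d :=
  Complex.isPrimitiveRoot_exp d (NeZero.ne d)

lemma omega_pow_d (d : ℕ) [NeZero d] : omega d ^ d = 1 := (omega_prim d).pow_eq_one

lemma omega_pow_mod (d : ℕ) [NeZero d] (a : ℕ) : omega d ^ a = omega d ^ (a % d) := by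
  conv_lhs => rw [← Nat.div_add_mod a d, pow_add, pow_mul, omega_pow_d, one_pow, one_mul]

lemma omega_pow_congr (d : ℕ) [NeZero d] {a b : ℕ} (h : (a : ZMod d) = b) :
    omega d ^ a = omega d ^ b := by
  rw [ZMod.natCast_eq_natCast_iff] at h
  rw [omega_pow_mod d a, omega_pow_mod d b, h]

lemma omega_orth (d : ℕ) [NeZero d] (m : ℕ) :
    ∑ l ∈ Finset.range d, omega d ^ (l * m) = if (d ∣ m) then (d : ℂ) else 0 := by
  split_ifs with h
  · obtain ⟨c, rfl⟩ := h
    have h1 : ∀ l, omega d ^ (l * (d * c)) = 1 := fun l => by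
      rw [show l * (d * c) = d * (l * c) by ring, pow_mul, omega_pow_d, one_pow]
    simp [h1]
  · have hx : omega d ^ m ≠ 1 := fun hx => h ((omega_prim d).pow_eq_one_iff_dvd m |>.mp hx)
    have : ∑ l ∈ Finset.range d, (omega d ^ m) ^ l = 0 := by
      have hgeom := geom_sum_eq hx d
      rw [hgeom, ← pow_mul, mul_comm, pow_mul, omega_pow_d, one_pow, sub_self, zero_div]
    simpa [pow_mul, mul_comm] using this


noncomputable def Fmat (d : ℕ) [NeZero d] : Matrix (Fin d) (Fin d) ℂ :=
  Matrix.of fun i j => omega d ^ ((i : ℕ) * (j : ℕ))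

noncomputable def Gmat (d : ℕ) [NeZero d] : Matrix (Fin d) (Fin d) ℂ :=
  Matrix.of fun i j => (1 / d) * omega d ^ ((d - 1) * ((i : ℕ) * (j : ℕ)))

lemma key_dvd (d : ℕ) [NeZero d] (n : ℕ) (hn : n < d) (j : Fin d) :
    d ∣ (n + (d - 1) * (j : ℕ)) ↔ n = (j : ℕ) := by
  have hd1 : ((d - 1 : ℕ) : ZMod d) = -1 := by
    have : ((d - 1 : ℕ) : ZMod d) + 1 = 0 := by
      rw [show ((1:ZMod d)) = ((1:ℕ) : ZMod d) by simp, ← Nat.cast_add,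
        Nat.sub_add_cancel (Nat.one_le_iff_ne_zero.mpr (NeZero.ne d))]
      simp
    linear_combination this
  constructor
  · intro h
    have : ((n + (d - 1) * (j : ℕ) : ℕ) : ZMod d) = 0 := by
      exact_mod_cast (ZMod.natCast_eq_zero_iff _ _).mpr h
    push_cast at this
    rw [hd1] at this
    have hnj : ((n : ZMod d)) = ((j : ℕ) : ZMod d) := by linear_combination this
    rw [ZMod.natCast_eq_natCast_iff] at hnj
    rwa [Nat.ModEq, Nat.mod_eq_of_lt hn, Nat.mod_eq_of_lt j.isLt] at hnj
  · rintro rfl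
    rw [← ZMod.natCast_eq_zero_iff]
    push_cast
    rw [hd1]; ring

lemma FG (d : ℕ) [NeZero d] : Fmat d * Gmat d = 1 := by
  ext i j
  simp only [Matrix.mul_apply, Fmat, Gmat, Matrix.of_apply]
  have : ∀ l : Fin d, omega d ^ ((i:ℕ) * l) * ((1/(d:ℂ)) * omega d ^ ((d-1) * ((l:ℕ) * (j:ℕ))))
      = (1/(d:ℂ)) * omega d ^ ((l:ℕ) * ((i:ℕ) + (d-1) * (j:ℕ))) := by
    intro l
    rw [show (l:ℕ) * ((i:ℕ) + (d-1) * (j:ℕ)) = (i:ℕ) * l + (d-1) * ((l:ℕ) * (j:ℕ)) by ring,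
      pow_add]
    ring
  rw [Finset.sum_congr rfl (fun l _ => this l), ← Finset.mul_sum,
    Fin.sum_univ_eq_sum_range (fun l => omega d ^ (l * ((i:ℕ) + (d-1) * (j:ℕ)))),
    omega_orth]
  rcases eq_or_ne i j with rfl | h
  · rw [if_pos ((key_dvd d i i.isLt i).mpr rfl)]
    simp [Matrix.one_apply]
  · rw [if_neg (fun hc => h (Fin.ext ((key_dvd d i i.isLt j).mp hc)))]
    simp [Matrix.one_apply, h]

lemma GF (d : ℕ) [NeZero d] : Gmat d * Fmat d = 1 := by
  ext i j
  simp only [Matrix.mul_apply, Fmat, Gmat, Matrix.of_apply]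
  have : ∀ l : Fin d, (1/(d:ℂ)) * omega d ^ ((d-1) * ((i:ℕ) * (l:ℕ))) * omega d ^ ((l:ℕ) * (j:ℕ))
      = (1/(d:ℂ)) * omega d ^ ((l:ℕ) * ((j:ℕ) + (d-1) * (i:ℕ))) := by
    intro l
    rw [show (l:ℕ) * ((j:ℕ) + (d-1) * (i:ℕ)) = (l:ℕ) * (j:ℕ) + (d-1) * ((i:ℕ) * (l:ℕ)) by ring,
      pow_add]
    ring
  rw [Finset.sum_congr rfl (fun l _ => this l), ← Finset.mul_sum,
    Fin.sum_univ_eq_sum_range (fun l => omega d ^ (l * ((j:ℕ) + (d-1) * (i:ℕ)))),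
    omega_orth]
  rcases eq_or_ne i j with rfl | h
  · rw [if_pos ((key_dvd d i i.isLt i).mpr rfl)]
    simp [Matrix.one_apply]
  · rw [if_neg (fun hc => h (Fin.ext ((key_dvd d j j.isLt i).mp hc)).symm)]
    simp [Matrix.one_apply, h]


noncomputable def Smat (d : ℕ) [NeZero d] (φ : ℕ → ℝ) : Matrix (Fin d) (Fin d) ℂ :=
  Matrix.of fun i j => if i = j + 1 then Complex.exp (Complex.I * φ (j : ℕ)) else 0

lemma Smat_pow (d : ℕ) [NeZero d] (φ : ℕ → ℝ) (n : ℕ) :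
    Smat d φ ^ n = Matrix.of fun i j =>
      if i = j + (n : Fin d) then
        ∏ t ∈ Finset.range n, Complex.exp (Complex.I * φ ((j + (t : Fin d) : Fin d) : ℕ))
      else 0 := by
  induction n with
  | zero =>
    ext i j
    simp [Matrix.one_apply, eq_comm]
  | succ n ih =>
    ext i j
    rw [pow_succ', ih]
    simp only [Matrix.mul_apply, Smat, Matrix.of_apply]
    rw [Finset.sum_eq_single (i - 1)]
    · rcases eq_or_ne i (j + ((n:ℕ)+1 : ℕ)) with he | he
      · rw [if_pos, if_pos he]
        · have hi1 : i - 1 = j + (n : Fin d) := by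
            rw [he]; push_cast; ring
          rw [if_pos hi1, Finset.prod_range_succ, hi1]
          ring
        · rw [he]; push_cast; ring
      · rw [if_neg he]
        rcases eq_or_ne i ((i - 1) + 1) with h1 | h1
        · rw [if_pos h1, if_neg, mul_zero]
          intro hc
          apply he
          rw [h1, hc]; push_cast; ring
        · rw [if_neg h1, zero_mul]
    · intro b _ hb
      rw [if_neg, zero_mul]
      intro hc
      exact hb (by rw [hc]; ring)
    · simp

lemma Smat_pow_d (d : ℕ) [NeZero d] (φ : ℕ → ℝ)
    (hφ : ∑ l ∈ Finset.range d, φ l = 0) : Smat d φ ^ d = 1 := by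
  rw [Smat_pow]
  ext i j
  have hd0 : ((d : ℕ) : Fin d) = 0 := by simp
  rw [Matrix.of_apply, hd0, add_zero]
  have hprod : ∏ t ∈ Finset.range d, Complex.exp (Complex.I * φ ((j + (t : Fin d) : Fin d) : ℕ))
      = 1 := by
    have h1 : ∏ t ∈ Finset.range d, Complex.exp (Complex.I * φ ((j + (t : Fin d) : Fin d) : ℕ))
        = ∏ t : Fin d, Complex.exp (Complex.I * φ ((j + t : Fin d) : ℕ)) := by
      rw [← Fin.prod_univ_eq_prod_range (fun t => Complex.exp (Complex.I * φ ((j + (t : Fin d) : Fin d) : ℕ)))]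
      exact Finset.prod_congr rfl (fun u _ => by rw [Fin.cast_val_eq_self])
    rw [h1]
    rw [Fintype.prod_bijective (fun u : Fin d => j + u) (Equiv.addLeft j).bijective _
      (fun v => Complex.exp (Complex.I * φ (v : ℕ))) (fun u => rfl)]
    rw [← Complex.exp_sum]
    have : ∑ v : Fin d, Complex.I * (φ (v : ℕ) : ℂ) = Complex.I * ∑ v : Fin d, (φ (v:ℕ) : ℂ) := by
      rw [Finset.mul_sum]
    rw [this]
    have h2 : ∑ v : Fin d, ((φ (v:ℕ) : ℝ) : ℂ) = ((∑ l ∈ Finset.range d, φ l : ℝ) : ℂ) := by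
      push_cast
      rw [Fin.sum_univ_eq_sum_range (fun l => ((φ l : ℝ) : ℂ))]
    rw [h2, hφ]
    simp
  rw [hprod, Matrix.one_apply]


lemma HWX_pow (d : ℕ) [NeZero d] (k : ℕ) :
    HWX d ^ k = Matrix.of fun i j => if i = j + (k : Fin d) then 1 else 0 := by
  induction k with
  | zero => ext i j; simp [Matrix.one_apply, eq_comm]
  | succ k ih =>
    ext i j
    rw [pow_succ', ih]
    simp only [Matrix.mul_apply, HWX, Matrix.of_apply]
    rw [Finset.sum_eq_single (i - 1)]
    · rcases eq_or_ne i (j + ((k:ℕ)+1 : ℕ)) with he | he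
      · rw [if_pos, if_pos he, if_pos, one_mul]
        · rw [he]; push_cast; ring
        · rw [he]; push_cast; ring
      · rw [if_neg he]
        rcases eq_or_ne i ((i - 1) + 1) with h1 | h1
        · rw [if_pos h1, if_neg, mul_zero]
          intro hc
          exact he (by rw [h1, hc]; push_cast; ring)
        · rw [if_neg h1, zero_mul]
    · intro b _ hb
      rw [if_neg (fun hc => hb (by rw [hc]; ring)), zero_mul]
    · simp

lemma ZX_pow_apply (d : ℕ) [NeZero d] (k : ℕ) (i j : Fin d) :
    (HWZ d * HWX d ^ k) i j = if i = j + (k : Fin d) then omega d ^ (i : ℕ) else 0 := by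
  rw [HWX_pow, HWZ]
  simp only [Matrix.mul_apply, Matrix.of_apply, mul_ite, mul_one, mul_zero]
  rw [Finset.sum_ite_eq' Finset.univ (j + (k : Fin d))
    (fun l => Matrix.diagonal (fun t : Fin d => omega d ^ (t : ℕ)) i l)]
  simp [Matrix.diagonal_apply]

lemma TF_eq_FS (d : ℕ) [NeZero d] (φ : ℕ → ℝ) :
    Tgate d φ * Fmat d = Fmat d * Smat d φ := by
  ext i m
  -- RHS
  have hRHS : (Fmat d * Smat d φ) i m
      = omega d ^ ((i : ℕ) * ((m + 1 : Fin d) : ℕ)) * Complex.exp (Complex.I * φ (m : ℕ)) := by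
    simp only [Matrix.mul_apply, Fmat, Smat, Matrix.of_apply, mul_ite, mul_zero, mul_one]
    rw [Finset.sum_eq_single (m + 1)]
    · simp
    · intro b _ hb
      exact if_neg hb
    · simp
  rw [hRHS]
  -- LHS
  have hL1 : (Tgate d φ * Fmat d) i m
      = ∑ k ∈ Finset.range d, alphaCoef d φ k *
          (omega d ^ (i : ℕ) * omega d ^ (((i - (k : Fin d) : Fin d) : ℕ) * (m : ℕ))) := by
    rw [Tgate, Finset.sum_mul]
    simp only [Matrix.smul_mul, Matrix.sum_apply, Matrix.smul_apply, smul_eq_mul]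
    refine Finset.sum_congr rfl (fun k _ => ?_)
    congr 1
    rw [Matrix.mul_apply]
    have hterm : ∀ j : Fin d, (HWZ d * HWX d ^ k) i j * Fmat d j m
        = if j = i - (k : Fin d) then omega d ^ (i:ℕ) * omega d ^ ((j:ℕ) * (m:ℕ)) else 0 := by
      intro j
      rw [ZX_pow_apply, Fmat]
      simp only [Matrix.of_apply, ite_mul, zero_mul]
      by_cases hj : j = i - (k : Fin d)
      · rw [if_pos (by rw [hj, sub_add_cancel]), if_pos hj]
      · rw [if_neg (fun hc => hj (by rw [hc]; ring)), if_neg hj]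
    rw [Finset.sum_congr rfl (fun j _ => hterm j),
      Finset.sum_ite_eq' Finset.univ (i - (k : Fin d))
        (fun j => omega d ^ (i:ℕ) * omega d ^ ((j:ℕ) * (m:ℕ)))]
    simp
  rw [hL1]
  -- expand alpha and swap sums
  have hL2 : ∀ k ∈ Finset.range d, alphaCoef d φ k *
        (omega d ^ (i : ℕ) * omega d ^ (((i - (k : Fin d) : Fin d) : ℕ) * (m : ℕ)))
      = ∑ n ∈ Finset.range d, (1/(d:ℂ)) * Complex.exp (Complex.I * φ n) *
          (omega d ^ ((i:ℕ) * ((m + 1 : Fin d) : ℕ)) * omega d ^ (k * (n + (d-1) * (m:ℕ)))) := by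
    intro k hk
    rw [alphaCoef, Finset.mul_sum, Finset.sum_mul]
    refine Finset.sum_congr rfl (fun n _ => ?_)
    have hcongr : omega d ^ (n * k) * (omega d ^ (i : ℕ) *
          omega d ^ (((i - (k : Fin d) : Fin d) : ℕ) * (m : ℕ)))
        = omega d ^ ((i:ℕ) * ((m + 1 : Fin d) : ℕ)) * omega d ^ (k * (n + (d-1) * (m:ℕ))) := by
      rw [← pow_add, ← pow_add, ← pow_add]
      apply omega_pow_congr
      have hsub : (((i - (k : Fin d) : Fin d) : ℕ) : ZMod d)
          = (i : ℕ) - ((k : Fin d) : ℕ) := by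
        rw [Fin.sub_def]
        push_cast [ZMod.natCast_mod]
        rw [Nat.cast_sub (le_of_lt (Fin.is_lt _))]
        simp [ZMod.natCast_self]
        ring
      have hadd : (((m + 1 : Fin d) : ℕ) : ZMod d) = (m : ℕ) + 1 := by
        rw [Fin.add_def]
        push_cast [ZMod.natCast_mod, Fin.val_one']
        simp
      have hk' : (((k : Fin d) : ℕ) : ZMod d) = (k : ZMod d) := by
        rw [Fin.val_natCast]
        push_cast [ZMod.natCast_mod]
        rfl
      have hd1 : ((d - 1 : ℕ) : ZMod d) = -1 := by
        have h0 : ((d - 1 : ℕ) : ZMod d) + 1 = 0 := by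
          rw [show ((1:ZMod d)) = ((1:ℕ) : ZMod d) by simp, ← Nat.cast_add,
            Nat.sub_add_cancel (Nat.one_le_iff_ne_zero.mpr (NeZero.ne d))]
          simp
        linear_combination h0
      push_cast [hsub, hadd, hk', hd1]
      ring
    calc (1/(d:ℂ)) * (omega d ^ (n * k) * Complex.exp (Complex.I * φ n)) *
          (omega d ^ (i : ℕ) * omega d ^ (((i - (k : Fin d) : Fin d) : ℕ) * (m : ℕ)))
        = (1/(d:ℂ)) * Complex.exp (Complex.I * φ n) * (omega d ^ (n * k) * (omega d ^ (i : ℕ) *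
            omega d ^ (((i - (k : Fin d) : Fin d) : ℕ) * (m : ℕ)))) := by ring
      _ = (1/(d:ℂ)) * Complex.exp (Complex.I * φ n) *
            (omega d ^ ((i:ℕ) * ((m + 1 : Fin d) : ℕ)) * omega d ^ (k * (n + (d-1) * (m:ℕ)))) := by
          rw [hcongr]
      _ = _ := by ring
  rw [Finset.sum_congr rfl hL2, Finset.sum_comm]
  -- now sum over k for each n
  have hL3 : ∀ n ∈ Finset.range d,
      ∑ k ∈ Finset.range d, (1/(d:ℂ)) * Complex.exp (Complex.I * φ n) *
          (omega d ^ ((i:ℕ) * ((m + 1 : Fin d) : ℕ)) * omega d ^ (k * (n + (d-1) * (m:ℕ))))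
      = (1/(d:ℂ)) * Complex.exp (Complex.I * φ n) * omega d ^ ((i:ℕ) * ((m + 1 : Fin d) : ℕ)) *
          (if d ∣ (n + (d-1) * (m:ℕ)) then (d:ℂ) else 0) := by
    intro n _
    rw [← omega_orth d, Finset.mul_sum]
    refine Finset.sum_congr rfl (fun k _ => ?_)
    ring
  rw [Finset.sum_congr rfl hL3]
  rw [Finset.sum_eq_single (m : ℕ)]
  · rw [if_pos ((key_dvd d m m.isLt m).mpr rfl)]
    have : ((d:ℂ)) ≠ 0 := by exact_mod_cast NeZero.ne d
    field_simp
  · intro n hn hnm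
    rw [if_neg (fun hc => hnm ((key_dvd d n (Finset.mem_range.mp hn) m).mp hc)), mul_zero]
  · intro h
    exact absurd (Finset.mem_range.mpr m.isLt) h


lemma myConjPow (d : ℕ) [NeZero d] (φ : ℕ → ℝ) (n : ℕ) :
    (Fmat d * Smat d φ * Gmat d) ^ n = Fmat d * Smat d φ ^ n * Gmat d := by
  induction n with
  | zero => rw [pow_zero, pow_zero, Matrix.mul_one, FG]
  | succ n ih =>
    have h : ∀ (A B : Matrix (Fin d) (Fin d) ℂ), A * Gmat d * (Fmat d * B) = A * B := by
      intro A B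
      rw [Matrix.mul_assoc, ← Matrix.mul_assoc (Gmat d), GF, Matrix.one_mul]
    rw [pow_succ, ih, pow_succ, Matrix.mul_assoc (Fmat d) (Smat d φ) (Gmat d),
      h (Fmat d * Smat d φ ^ n) (Smat d φ * Gmat d), ← Matrix.mul_assoc, ← Matrix.mul_assoc]

/-- If `∑_{l=0}^{d-1} φ_l = 0` then `T^d = 1`. -/
theorem stmt_8 (d : ℕ) [NeZero d] (φ : ℕ → ℝ)
    (hφ : ∑ l ∈ Finset.range d, φ l = 0) :
    (Tgate d φ) ^ d = 1 := by
  have hT : Tgate d φ = Fmat d * Smat d φ * Gmat d := by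
    calc Tgate d φ = Tgate d φ * (Fmat d * Gmat d) := by rw [FG, Matrix.mul_one]
      _ = (Tgate d φ * Fmat d) * Gmat d := by rw [Matrix.mul_assoc]
      _ = Fmat d * Smat d φ * Gmat d := by rw [TF_eq_FS]
  rw [hT, myConjPow, Smat_pow_d d φ hφ, Matrix.mul_one, FG]
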